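/- Let Φ be an irreducible root system with base Δ, lowest root α₀, marks d(α), and let 𝒪 ⊆ Δ_a be nonempty. Set d = Σ_{α ∈ 𝒪} d(α) and define s ∈ Hom(ℤΦ, ℂ×) by α(s) = 1 for α ∈ Δ \ (𝒪 ∩ Δ) and α(s) = ζ_d for α ∈ 𝒪 ∩ Δ. Let Σ₀ be the set of roots that are ℤ-linear combinations of Δ_a \ 𝒪, and Σ₀⁺ (resp. Σ₀⁻) those with all coefficients ≥ 0 (resp. ≤ 0). Then {α ∈ Φ : α(s) = 1} = Σ₀ = Σ₀⁺ ∪ Σ₀⁻. -/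

import Mathlib

open Finset

/-- A (crystallographic, reduced, irreducible) root system in a `ℚ`-vector space,
encoded by its set of roots together with a choice of coroots. -/
structure RootSystemData (V : Type*) [AddCommGroup V] [Module ℚ V] where
  Φ : Set V
  coroot : V → V →ₗ[ℚ] ℚ
  finite : Φ.Finite
  ne_zero : ∀ α ∈ Φ, α ≠ (0 : V)
  span_eq_top : Submodule.span ℚ Φ = ⊤
  coroot_self : ∀ α ∈ Φ, coroot α α = 2
  reflect_mem : ∀ α ∈ Φ, ∀ β ∈ Φ, β - coroot α β • α ∈ Φ
  crystallographic : ∀ α ∈ Φ, ∀ β ∈ Φ, ∃ n : ℤ, coroot α β = (n : ℚ)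
  reduced : ∀ α ∈ Φ, ∀ t : ℚ, t • α ∈ Φ → t = 1 ∨ t = -1
  irreducible : ∀ Φ₁ Φ₂ : Set V, Φ₁ ∪ Φ₂ = Φ → Φ₁ ∩ Φ₂ = ∅ →
    (∀ α ∈ Φ₁, ∀ β ∈ Φ₂, coroot α β = 0) → Φ₁ = ∅ ∨ Φ₂ = ∅

variable {V : Type*} [AddCommGroup V] [Module ℚ V]

/-- `Δ` is a base (set of simple roots) of the root system: it is linearly independent and
every root is a nonnegative or nonpositive integer combination of the simple roots. -/
def RootSystemData.IsBase (R : RootSystemData V) (Δ : Finset V) : Prop :=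
  (↑Δ : Set V) ⊆ R.Φ ∧ LinearIndependent ℚ (fun a : {x : V // x ∈ Δ} => (a : V)) ∧
    ∀ β ∈ R.Φ, (∃ c : V → ℕ, β = ∑ α ∈ Δ, (c α : ℚ) • α) ∨
      (∃ c : V → ℕ, β = -∑ α ∈ Δ, (c α : ℚ) • α)

/-- `β` is a positive root with respect to the base `Δ`. -/
def RootSystemData.IsPos (R : RootSystemData V) (Δ : Finset V) (β : V) : Prop :=
  β ∈ R.Φ ∧ ∃ c : V → ℕ, β = ∑ α ∈ Δ, (c α : ℚ) • α

/-- `θ` is the highest root with respect to `Δ`: a positive root which dominates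
every positive root for the dominance order. -/
def RootSystemData.IsHighest (R : RootSystemData V) (Δ : Finset V) (θ : V) : Prop :=
  R.IsPos Δ θ ∧ ∀ β : V, R.IsPos Δ β → ∃ c : V → ℕ, θ - β = ∑ α ∈ Δ, (c α : ℚ) • α

/-! Since `α₀ = -θ` and `d = ∑_{α ∈ 𝒪} d(α)`, the character `s` is trivial on `Δ_a \ 𝒪`, hence
on every `ℤ`-combination of it. Conversely let `β = ∑ c(α) α` be a positive root with `β(s) = 1`.
As `θ` is the highest root, `c ≤ d` coefficientwise, so `k = ∑_{α ∈ Δ ∩ 𝒪} c(α)` is a multiple of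
`d` (since `β(s) = ζ^k`) with `k ≤ ∑_{α ∈ Δ ∩ 𝒪} d(α) ≤ d`, the last inequality being strict when
`α₀ ∈ 𝒪`. Either `k = 0` and `β` is a nonnegative combination of `Δ \ 𝒪`, or `k = d`, which forces
`α₀ ∉ 𝒪` and `c = d` on `𝒪`, so that `-β = α₀ + (θ - β)` is a nonnegative combination of
`Δ_a \ 𝒪`. Negative roots are handled through `-β`. -/

section MapAdd

variable {A G : Type*} [AddCommGroup A] [CommGroup G] {s : A → G}

lemma map_neg_of_map_add (hs : ∀ x y, s (x + y) = s x * s y) (x : A) : s (-x) = (s x)⁻¹ :=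
  map_neg (AddMonoidHom.mk' (fun x => Additive.ofMul (s x)) hs) x

lemma map_eq_one_of_mem_span (hs : ∀ x y, s (x + y) = s x * s y) {S : Set A}
    (hS : ∀ x ∈ S, s x = 1) {β : A} (hβ : β ∈ Submodule.span ℤ S) : s β = 1 :=
  (Submodule.span_le
    (p := (AddMonoidHom.mk' (fun x => Additive.ofMul (s x)) hs).ker.toIntSubmodule)).mpr hS hβ

lemma map_sum_natCast_smul_of_map_add [Module ℚ A] (hs : ∀ x y, s (x + y) = s x * s y)
    (T : Finset A) (c : A → ℕ) : s (∑ x ∈ T, (c x : ℚ) • x) = ∏ x ∈ T, s x ^ c x := by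
  let χ := AddMonoidHom.mk' (fun x => Additive.ofMul (s x)) hs
  simp only [Nat.cast_smul_eq_nsmul]
  exact (map_sum χ _ T).trans (Finset.sum_congr rfl fun x _ => map_nsmul χ (c x) x)

lemma map_sum_natCast_smul_eq_pow [Module ℚ A] [DecidableEq A] (hs : ∀ x y, s (x + y) = s x * s y)
    {Δ O : Finset A} {ζ : G} (hs1 : ∀ α ∈ Δ, α ∉ O → s α = 1) (hsζ : ∀ α ∈ Δ, α ∈ O → s α = ζ)
    (c : A → ℕ) : s (∑ α ∈ Δ, (c α : ℚ) • α) = ζ ^ ∑ α ∈ Δ ∩ O, c α := by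
  have hinter : ∏ α ∈ Δ ∩ O, s α ^ c α = ζ ^ ∑ α ∈ Δ ∩ O, c α := by
    rw [← prod_pow_eq_pow_sum]
    exact prod_congr rfl fun α hα => by rw [hsζ α (mem_inter.1 hα).1 (mem_inter.1 hα).2]
  have hsdiff : ∏ α ∈ Δ \ O, s α ^ c α = 1 :=
    prod_eq_one fun α hα => by rw [hs1 α (mem_sdiff.1 hα).1 (mem_sdiff.1 hα).2, one_pow]
  rw [map_sum_natCast_smul_of_map_add hs, ← prod_inter_mul_prod_sdiff Δ O, hinter, hsdiff, mul_one]

end MapAdd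

section Combinations

variable {A : Type*} [AddCommGroup A] [Module ℚ A]

lemma mem_closure_of_eq_sum {T S : Finset A} {c : A → ℕ} {β : A}
    (hβ : β = ∑ x ∈ T, (c x : ℚ) • x) (hc : ∀ x ∈ T, c x ≠ 0 → x ∈ S) :
    β ∈ AddSubmonoid.closure (S : Set A) := by
  rw [hβ]
  refine AddSubmonoid.sum_mem _ fun x hx => ?_
  rw [Nat.cast_smul_eq_nsmul]
  by_cases hcx : c x = 0
  · simp [hcx]
  · exact nsmul_mem (AddSubmonoid.subset_closure (hc x hx hcx)) _

lemma exists_natCast_smul_sum_iff_mem_closure {S : Finset A} {β : A} :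
    (∃ c : A → ℕ, β = ∑ x ∈ S, (c x : ℚ) • x) ↔ β ∈ AddSubmonoid.closure (S : Set A) := by
  refine ⟨fun ⟨c, hc⟩ => mem_closure_of_eq_sum hc fun x hx _ => hx, fun h => ?_⟩
  obtain ⟨c, -, rfl⟩ := AddSubmonoid.mem_closure_finset.1 h
  exact ⟨c, by simp only [Nat.cast_smul_eq_nsmul]⟩

lemma exists_intCast_smul_sum_iff_mem_span {S : Finset A} {β : A} :
    (∃ c : A → ℤ, β = ∑ x ∈ S, (c x : ℚ) • x) ↔ β ∈ Submodule.span ℤ (S : Set A) := by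
  classical
  simp only [Submodule.mem_span_finset, Int.cast_smul_eq_zsmul]
  constructor
  · rintro ⟨c, rfl⟩
    exact ⟨fun x => if x ∈ S then c x else 0, fun x hx => by_contra fun h => hx (if_neg h),
      sum_congr rfl fun x hx => by simp [hx]⟩
  · rintro ⟨c, -, rfl⟩
    exact ⟨c, rfl⟩

end Combinations

lemma sum_inter_add_ite_eq_sum {ι M : Type*} [DecidableEq ι] [AddCommMonoid M] {Δ O : Finset ι}
    {a : ι} (hO : O ⊆ insert a Δ) (ha : a ∉ Δ) (f : ι → M) :
    ∑ i ∈ Δ ∩ O, f i + (if a ∈ O then f a else 0) = ∑ i ∈ O, f i := by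
  conv_rhs => rw [← inter_eq_right.2 hO]
  split_ifs with haO
  · rw [insert_inter_of_mem haO, sum_insert fun h => ha (mem_inter.1 h).1, add_comm]
  · rw [insert_inter_of_notMem haO, add_zero]

lemma eq_zero_or_eq_and_not_of_dvd {k m d : ℕ} {p : Prop} [Decidable p] (hdvd : d ∣ k)
    (hk : k ≤ m) (hm : m + (if p then 1 else 0) = d) : k = 0 ∨ (k = m ∧ ¬p) := by
  rcases Nat.eq_zero_or_pos k with hk0 | hk0
  · exact Or.inl hk0
  · have := Nat.le_of_dvd hk0 hdvd
    split_ifs at hm with hp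
    · omega
    · exact Or.inr ⟨by omega, hp⟩

lemma RootSystemData.neg_mem (R : RootSystemData V) {β : V} (hβ : β ∈ R.Φ) : -β ∈ R.Φ := by
  have h := R.reflect_mem β hβ β hβ
  rwa [R.coroot_self β hβ, show β - (2 : ℚ) • β = -β by module] at h

lemma RootSystemData.IsHighest.exists_coeff_add {R : RootSystemData V} {Δ : Finset V} {θ : V}
    (hΔ : R.IsBase Δ) (hθ : R.IsHighest Δ θ) {dm c : V → ℕ}
    (hdθ : θ = ∑ α ∈ Δ, (dm α : ℚ) • α) {β : V} (hβ : β ∈ R.Φ)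
    (hc : β = ∑ α ∈ Δ, (c α : ℚ) • α) :
    ∃ e : V → ℕ, θ - β = ∑ α ∈ Δ, (e α : ℚ) • α ∧ ∀ α ∈ Δ, dm α = c α + e α := by
  obtain ⟨e, he⟩ := hθ.2 β ⟨hβ, c, hc⟩
  refine ⟨e, he, fun α hα => ?_⟩
  have hsum : ∑ α ∈ Δ, (dm α : ℚ) • α = ∑ α ∈ Δ, ((c α : ℚ) + e α) • α := by
    simp only [add_smul, sum_add_distrib, ← hc, ← he, ← hdθ, add_sub_cancel]
  exact_mod_cast (linearIndepOn_finset_iffₛ (v := id)).1 hΔ.2.1 _ _ hsum α hα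

section Kernel

variable [DecidableEq V] {R : RootSystemData V} {Δ O : Finset V} {θ α₀ : V} {dm : V → ℕ} {d : ℕ}
  {G : Type*} [CommGroup G] {ζ : G} {s : V → G}

lemma map_eq_one_of_mem_sdiff (hα₀ : α₀ = -θ) (hdθ : θ = ∑ α ∈ Δ, (dm α : ℚ) • α)
    (hdO : ∑ α ∈ Δ ∩ O, dm α + (if α₀ ∈ O then 1 else 0) = d) (hζ : IsPrimitiveRoot ζ d)
    (hs : ∀ x y, s (x + y) = s x * s y) (hs1 : ∀ α ∈ Δ, α ∉ O → s α = 1)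
    (hsζ : ∀ α ∈ Δ, α ∈ O → s α = ζ) : ∀ x ∈ insert α₀ Δ \ O, s x = 1 := by
  intro x hx
  obtain ⟨hx, hxO⟩ := mem_sdiff.1 hx
  rcases mem_insert.1 hx with rfl | hxΔ
  · rw [if_neg hxO, add_zero] at hdO
    rw [hα₀, map_neg_of_map_add hs, hdθ, map_sum_natCast_smul_eq_pow hs hs1 hsζ, hdO,
      hζ.pow_eq_one, inv_one]
  · exact hs1 x hxΔ hxO

lemma mem_closure_or_neg_mem_closure_of_isPos (hΔ : R.IsBase Δ) (hθ : R.IsHighest Δ θ)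
    (hα₀ : α₀ = -θ) (hdθ : θ = ∑ α ∈ Δ, (dm α : ℚ) • α)
    (hdO : ∑ α ∈ Δ ∩ O, dm α + (if α₀ ∈ O then 1 else 0) = d) (hζ : IsPrimitiveRoot ζ d)
    (hs : ∀ x y, s (x + y) = s x * s y) (hs1 : ∀ α ∈ Δ, α ∉ O → s α = 1)
    (hsζ : ∀ α ∈ Δ, α ∈ O → s α = ζ) {β : V} (hβ : R.IsPos Δ β) (hsβ : s β = 1) :
    β ∈ AddSubmonoid.closure (↑(insert α₀ Δ \ O) : Set V) ∨
      -β ∈ AddSubmonoid.closure (↑(insert α₀ Δ \ O) : Set V) := by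
  obtain ⟨hβΦ, c, hc⟩ := hβ
  obtain ⟨e, he, hdm⟩ := hθ.exists_coeff_add hΔ hdθ hβΦ hc
  have hdvd : d ∣ ∑ α ∈ Δ ∩ O, c α := by
    rw [← hζ.pow_eq_one_iff_dvd, ← map_sum_natCast_smul_eq_pow hs hs1 hsζ, ← hc, hsβ]
  have hle : ∀ α ∈ Δ ∩ O, c α ≤ dm α := fun α hα => by
    rw [hdm α (mem_inter.1 hα).1]; exact Nat.le_add_right _ _
  rcases eq_zero_or_eq_and_not_of_dvd hdvd (sum_le_sum hle) hdO with hk | ⟨hk, hα₀O⟩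
  · refine Or.inl (mem_closure_of_eq_sum hc fun α hα hcα => ?_)
    have hαO : α ∉ O := fun hαO => hcα (sum_eq_zero_iff.1 hk α (mem_inter.2 ⟨hα, hαO⟩))
    exact mem_sdiff.2 ⟨mem_insert_of_mem hα, hαO⟩
  · have hθβ : θ - β ∈ AddSubmonoid.closure (↑(insert α₀ Δ \ O) : Set V) := by
      refine mem_closure_of_eq_sum he fun α hα heα => mem_sdiff.2 ⟨mem_insert_of_mem hα, ?_⟩
      intro hαO
      have hcα : c α = dm α := (sum_eq_sum_iff_of_le hle).1 hk α (mem_inter.2 ⟨hα, hαO⟩)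
      have hdmα := hdm α hα
      omega
    have hα₀S : α₀ ∈ (↑(insert α₀ Δ \ O) : Set V) := by simp [hα₀O]
    refine Or.inr ?_
    rw [show -β = α₀ + (θ - β) by rw [hα₀]; abel]
    exact add_mem (AddSubmonoid.subset_closure hα₀S) hθβ

lemma mem_closure_or_neg_mem_closure_of_map_eq_one (hΔ : R.IsBase Δ) (hθ : R.IsHighest Δ θ)
    (hα₀ : α₀ = -θ) (hdθ : θ = ∑ α ∈ Δ, (dm α : ℚ) • α)
    (hdO : ∑ α ∈ Δ ∩ O, dm α + (if α₀ ∈ O then 1 else 0) = d) (hζ : IsPrimitiveRoot ζ d)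
    (hs : ∀ x y, s (x + y) = s x * s y) (hs1 : ∀ α ∈ Δ, α ∉ O → s α = 1)
    (hsζ : ∀ α ∈ Δ, α ∈ O → s α = ζ) {β : V} (hβ : β ∈ R.Φ) (hsβ : s β = 1) :
    β ∈ AddSubmonoid.closure (↑(insert α₀ Δ \ O) : Set V) ∨
      -β ∈ AddSubmonoid.closure (↑(insert α₀ Δ \ O) : Set V) := by
  rcases hΔ.2.2 β hβ with hpos | ⟨c, hc⟩
  · exact mem_closure_or_neg_mem_closure_of_isPos hΔ hθ hα₀ hdθ hdO hζ hs hs1 hsζ ⟨hβ, hpos⟩ hsβ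
  · have hneg : R.IsPos Δ (-β) := ⟨R.neg_mem hβ, c, by rw [hc, neg_neg]⟩
    have hsneg : s (-β) = 1 := by rw [map_neg_of_map_add hs, hsβ, inv_one]
    simpa only [neg_neg, or_comm] using
      mem_closure_or_neg_mem_closure_of_isPos hΔ hθ hα₀ hdθ hdO hζ hs hs1 hsζ hneg hsneg

end Kernel

theorem stmt_11_general {V : Type*} [AddCommGroup V] [Module ℚ V] [DecidableEq V]
    (R : RootSystemData V) (Δ : Finset V) (hΔ : R.IsBase Δ)
    (θ : V) (hθ : R.IsHighest Δ θ)
    (α₀ : V) (hα₀ : α₀ = -θ) (hα₀Δ : α₀ ∉ Δ)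
    (dm : V → ℕ) (hd0 : dm α₀ = 1) (hdθ : θ = ∑ α ∈ Δ, (dm α : ℚ) • α)
    (O : Finset V) (hOsub : O ⊆ insert α₀ Δ)
    (d : ℕ) (hd : d = ∑ α ∈ O, dm α)
    (ζ : ℂˣ) (hζ : IsPrimitiveRoot ζ d)
    (s : V → ℂˣ) (hs : ∀ x y : V, s (x + y) = s x * s y)
    (hs1 : ∀ α ∈ Δ, α ∉ O → s α = 1)
    (hsζ : ∀ α ∈ Δ, α ∈ O → s α = ζ) :
    {β : V | β ∈ R.Φ ∧ s β = 1} =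
      {β : V | β ∈ R.Φ ∧ ∃ c : V → ℤ, β = ∑ x ∈ insert α₀ Δ \ O, (c x : ℚ) • x} ∧
    {β : V | β ∈ R.Φ ∧ ∃ c : V → ℤ, β = ∑ x ∈ insert α₀ Δ \ O, (c x : ℚ) • x} =
      {β : V | β ∈ R.Φ ∧ ∃ c : V → ℕ, β = ∑ x ∈ insert α₀ Δ \ O, (c x : ℚ) • x} ∪
      {β : V | β ∈ R.Φ ∧ ∃ c : V → ℕ, β = -∑ x ∈ insert α₀ Δ \ O, (c x : ℚ) • x} := by
  set S : Set V := ↑(insert α₀ Δ \ O)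
  have hdO : ∑ α ∈ Δ ∩ O, dm α + (if α₀ ∈ O then 1 else 0) = d := by
    rw [hd, ← sum_inter_add_ite_eq_sum hOsub hα₀Δ dm, hd0]
  have hS := map_eq_one_of_mem_sdiff hα₀ hdθ hdO hζ hs hs1 hsζ
  have hclosure : ∀ β ∈ R.Φ, s β = 1 →
      β ∈ AddSubmonoid.closure S ∨ -β ∈ AddSubmonoid.closure S := fun β hβ =>
    mem_closure_or_neg_mem_closure_of_map_eq_one hΔ hθ hα₀ hdθ hdO hζ hs hs1 hsζ hβ
  have hspan_of_closure {β : V} :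
      β ∈ AddSubmonoid.closure S ∨ -β ∈ AddSubmonoid.closure S → β ∈ Submodule.span ℤ S := by
    have hle := AddSubmonoid.closure_le.2 (Submodule.subset_span (R := ℤ) (s := S))
    rintro (h | h)
    exacts [hle h, neg_neg β ▸ neg_mem (hle h)]
  have hker : ∀ β ∈ R.Φ, s β = 1 ↔ β ∈ Submodule.span ℤ S := fun β hβ =>
    ⟨fun h => hspan_of_closure (hclosure β hβ h), map_eq_one_of_mem_span hs hS⟩
  have hsplit : ∀ β ∈ R.Φ, β ∈ Submodule.span ℤ S ↔
      β ∈ AddSubmonoid.closure S ∨ -β ∈ AddSubmonoid.closure S := fun β hβ =>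
    ⟨fun h => hclosure β hβ (map_eq_one_of_mem_span hs hS h), hspan_of_closure⟩
  simp only [exists_intCast_smul_sum_iff_mem_span, ← neg_eq_iff_eq_neg,
    exists_natCast_smul_sum_iff_mem_closure, ← Set.ofPred_or, ← and_or_left]
  exact ⟨Set.ext fun β => and_congr_right (hker β), Set.ext fun β => and_congr_right (hsplit β)⟩

/-- With $s$ determined by $\mathcal{O}$ via its values on $\Delta$, the set
$\{\alpha \in \Phi : \alpha(s) = 1\}$ equals the set $\Sigma_0$ of roots that are
$\mathbb{Z}$-combinations of $\Delta_a\setminus\mathcal{O}$, and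
$\Sigma_0 = \Sigma_0^+ \cup \Sigma_0^-$. -/
theorem stmt_11 {V : Type*} [AddCommGroup V] [Module ℚ V] [DecidableEq V]
    (R : RootSystemData V) (Δ : Finset V) (hΔ : R.IsBase Δ)
    (θ : V) (hθ : R.IsHighest Δ θ)
    (α₀ : V) (hα₀ : α₀ = -θ) (hα₀Δ : α₀ ∉ Δ)
    (dm : V → ℕ) (hd0 : dm α₀ = 1) (hdθ : θ = ∑ α ∈ Δ, (dm α : ℚ) • α)
    (O : Finset V) (hOsub : O ⊆ insert α₀ Δ) (hOne : O.Nonempty)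
    (d : ℕ) (hd : d = ∑ α ∈ O, dm α)
    (ζ : ℂˣ) (hζ : IsPrimitiveRoot ζ d)
    (s : V → ℂˣ) (hs : ∀ x y : V, s (x + y) = s x * s y)
    (hs1 : ∀ α ∈ Δ, α ∉ O → s α = 1)
    (hsζ : ∀ α ∈ Δ, α ∈ O → s α = ζ) :
    {β : V | β ∈ R.Φ ∧ s β = 1} =
      {β : V | β ∈ R.Φ ∧ ∃ c : V → ℤ, β = ∑ x ∈ insert α₀ Δ \ O, (c x : ℚ) • x} ∧
    {β : V | β ∈ R.Φ ∧ ∃ c : V → ℤ, β = ∑ x ∈ insert α₀ Δ \ O, (c x : ℚ) • x} =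
      {β : V | β ∈ R.Φ ∧ ∃ c : V → ℕ, β = ∑ x ∈ insert α₀ Δ \ O, (c x : ℚ) • x} ∪
      {β : V | β ∈ R.Φ ∧ ∃ c : V → ℕ, β = -∑ x ∈ insert α₀ Δ \ O, (c x : ℚ) • x} :=
  stmt_11_general R Δ hΔ θ hθ α₀ hα₀ hα₀Δ dm hd0 hdθ O hOsub d hd ζ hζ s hs hs1 hsζ
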